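/- arXiv:1710.05892 — 3 statements merged into one kernel-verified Lean document; each statement's English description precedes it below -/
import Mathlib

section
/- Let P ∈ NS be a no-signalling behaviour in the (2,2,2,2) Bell scenario whose CHSH value β := ⟨A₀B₀⟩ + ⟨A₀B₁⟩ + ⟨A₁B₀⟩ − ⟨A₁B₁⟩ satisfies β > 2. Then the visibility of P against no-signalling noise equals (β − 2)/(β + 4); that is, inf{λ ∈ [0,1] : ∃ P_noise ∈ NS such that (1−λ)P + λP_noise ∈ L} = (β − 2)/(β + 4). -/
open Matrix Kronecker ComplexOrder BigOperators

/-- A behaviour in the (2,2,2,2) Bell scenario: `P a b x y = P(ab|xy)`. -/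
abbrev Behaviour : Type := Fin 2 → Fin 2 → Fin 2 → Fin 2 → ℝ

/-- `P` admits a quantum realisation of local dimension `d`. -/
def HasRealisation (d : ℕ) (P : Behaviour) : Prop :=
  ∃ (ρ : Matrix (Fin d × Fin d) (Fin d × Fin d) ℂ)
    (E F : Fin 2 → Fin 2 → Matrix (Fin d) (Fin d) ℂ),
    ρ.PosSemidef ∧ ρ.trace = 1 ∧
    (∀ x a, (E x a).PosSemidef) ∧ (∀ y b, (F y b).PosSemidef) ∧
    (∀ x, ∑ a, E x a = 1) ∧ (∀ y, ∑ b, F y b = 1) ∧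
    ∀ a b x y, (P a b x y : ℂ) = ((E x a ⊗ₖ F y b) * ρ).trace

def Qfinite : Set Behaviour := {P | ∃ d : ℕ, 0 < d ∧ HasRealisation d P}

def Q : Set Behaviour := closure Qfinite

def detBehaviour (f g : Fin 2 → Fin 2) : Behaviour :=
  fun a b x y => if a = f x ∧ b = g y then 1 else 0

def L : Set Behaviour := convexHull ℝ {P | ∃ f g, P = detBehaviour f g}

def NS : Set Behaviour :=
  {P | (∀ a b x y, 0 ≤ P a b x y) ∧
       (∀ x y : Fin 2, ∑ a : Fin 2, ∑ b : Fin 2, P a b x y = 1) ∧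
       (∀ (a x y y' : Fin 2), ∑ b : Fin 2, P a b x y = ∑ b : Fin 2, P a b x y') ∧
       (∀ (b x x' y : Fin 2), ∑ a : Fin 2, P a b x y = ∑ a : Fin 2, P a b x' y)}

def margA (P : Behaviour) (x : Fin 2) : ℝ :=
  ∑ a : Fin 2, ∑ b : Fin 2, (-1 : ℝ) ^ (a : ℕ) * P a b x 0

def margB (P : Behaviour) (y : Fin 2) : ℝ :=
  ∑ a : Fin 2, ∑ b : Fin 2, (-1 : ℝ) ^ (b : ℕ) * P a b 0 y

def corr (P : Behaviour) (x y : Fin 2) : ℝ :=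
  ∑ a : Fin 2, ∑ b : Fin 2, (-1 : ℝ) ^ ((a : ℕ) + (b : ℕ)) * P a b x y

def chsh (P : Behaviour) : ℝ := corr P 0 0 + corr P 0 1 + corr P 1 0 - corr P 1 1

def bell (B P : Behaviour) : ℝ := ∑ a : Fin 2, ∑ b : Fin 2, ∑ x : Fin 2, ∑ y : Fin 2, B a b x y * P a b x y

noncomputable def beta (B : Behaviour) (S : Set Behaviour) : ℝ := sSup (bell B '' S)

def face (B : Behaviour) (S : Set Behaviour) : Set Behaviour :=
  {P ∈ S | bell B P = beta B S}

/-- Reconstruct a behaviour from marginals and correlators. -/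
noncomputable def fromCorr (mA mB : Fin 2 → ℝ) (c : Fin 2 → Fin 2 → ℝ) : Behaviour :=
  fun a b x y =>
    (1 + (-1 : ℝ) ^ (a : ℕ) * mA x + (-1 : ℝ) ^ (b : ℕ) * mB y
      + (-1 : ℝ) ^ ((a : ℕ) + (b : ℕ)) * c x y) / 4



/-! ### Auxiliary lemmas -/

private lemma fin2_cases (i : Fin 2) : i = 0 ∨ i = 1 := by omega

/-- The eight deterministic strategies on the CHSH facet. -/
private def detF : Fin 8 → (Fin 2 → Fin 2) :=
  ![![0,0], ![0,0], ![0,1], ![0,1], ![1,0], ![1,0], ![1,1], ![1,1]]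

private def detG : Fin 8 → (Fin 2 → Fin 2) :=
  ![![0,0], ![0,1], ![0,0], ![1,0], ![0,1], ![1,1], ![1,0], ![1,1]]

private noncomputable def facetWt (M : Behaviour) : Fin 8 → ℝ :=
  ![M 0 0 1 1, M 0 1 0 1, M 1 0 1 0, M 0 1 0 0,
    M 1 0 0 0, M 0 1 1 0, M 1 0 0 1, M 1 1 1 1]

/-- A no-signalling behaviour on the CHSH facet is local (Fine). -/
private lemma mem_L_of_chsh_eq_two (M : Behaviour) (hM : M ∈ NS) (h2 : chsh M = 2) :
    M ∈ L := by
  obtain ⟨hpos, hnorm, hA, hB⟩ := hM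
  have hn00 := hnorm 0 0; have hn01 := hnorm 0 1
  have hn10 := hnorm 1 0; have hn11 := hnorm 1 1
  simp only [Fin.sum_univ_two] at hn00 hn01 hn10 hn11
  have hA00 := hA 0 0 0 1; have hA01 := hA 0 1 0 1
  have hA10 := hA 1 0 0 1; have hA11 := hA 1 1 0 1
  have hB00 := hB 0 0 1 0; have hB01 := hB 0 0 1 1
  have hB10 := hB 1 0 1 0; have hB11 := hB 1 0 1 1
  simp only [Fin.sum_univ_two] at hA00 hA01 hA10 hA11 hB00 hB01 hB10 hB11
  simp only [chsh, corr, Fin.sum_univ_two, Fin.val_zero, Fin.val_one] at h2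
  norm_num at h2
  have key : ∑ k : Fin 8, facetWt M k • detBehaviour (detF k) (detG k) = M := by
    funext a b x y
    have hs : ∀ N : Fin 8 → Behaviour,
        (∑ k : Fin 8, facetWt M k • N k) a b x y
          = ∑ k : Fin 8, facetWt M k * N k a b x y := by
      intro N
      simp [Finset.sum_apply, Pi.smul_apply]
    rcases fin2_cases a with ha | ha <;> rcases fin2_cases b with hb | hb <;>
      rcases fin2_cases x with hx | hx <;> rcases fin2_cases y with hy | hy <;>
      subst ha hb hx hy <;>
      rw [hs] <;>
      simp (config := { decide := true }) only [Fin.sum_univ_eight, detBehaviour,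
        show facetWt M 0 = M 0 0 1 1 from rfl, show facetWt M 1 = M 0 1 0 1 from rfl,
        show facetWt M 2 = M 1 0 1 0 from rfl, show facetWt M 3 = M 0 1 0 0 from rfl,
        show facetWt M 4 = M 1 0 0 0 from rfl, show facetWt M 5 = M 0 1 1 0 from rfl,
        show facetWt M 6 = M 1 0 0 1 from rfl, show facetWt M 7 = M 1 1 1 1 from rfl,
        if_true, if_false, mul_one, mul_zero, add_zero, zero_add] <;>
      linarith
  rw [← key]
  refine (convex_convexHull ℝ _).sum_mem (fun i _ => ?_) ?_ (fun i _ => ?_)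
  · fin_cases i <;> exact hpos _ _ _ _
  · simp only [Fin.sum_univ_eight,
      show facetWt M 0 = M 0 0 1 1 from rfl, show facetWt M 1 = M 0 1 0 1 from rfl,
      show facetWt M 2 = M 1 0 1 0 from rfl, show facetWt M 3 = M 0 1 0 0 from rfl,
      show facetWt M 4 = M 1 0 0 0 from rfl, show facetWt M 5 = M 0 1 1 0 from rfl,
      show facetWt M 6 = M 1 0 0 1 from rfl, show facetWt M 7 = M 1 1 1 1 from rfl]
    linarith
  · exact subset_convexHull ℝ _ ⟨detF i, detG i, rfl⟩

private lemma chsh_det_le_two (f g : Fin 2 → Fin 2) : chsh (detBehaviour f g) ≤ 2 := by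
  rcases fin2_cases (f 0) with h1 | h1 <;> rcases fin2_cases (f 1) with h2 | h2 <;>
    rcases fin2_cases (g 0) with h3 | h3 <;> rcases fin2_cases (g 1) with h4 | h4 <;>
    simp [chsh, corr, Fin.sum_univ_two, detBehaviour, h1, h2, h3, h4] <;> norm_num

private lemma chsh_isLinear : IsLinearMap ℝ chsh := by
  constructor <;> intros <;>
    simp [chsh, corr, Fin.sum_univ_two, Pi.add_apply, Pi.smul_apply, smul_eq_mul] <;> ring

private lemma chsh_le_two_of_mem_L {Q : Behaviour} (hQ : Q ∈ L) : chsh Q ≤ 2 := by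
  have : L ⊆ {R : Behaviour | chsh R ≤ 2} := by
    apply convexHull_min
    · rintro R ⟨f, g, rfl⟩
      exact chsh_det_le_two f g
    · exact convex_halfSpace_le chsh_isLinear 2
  exact this hQ

private lemma corr_bounds {Q : Behaviour} (hQ : Q ∈ NS) (x y : Fin 2) :
    -1 ≤ corr Q x y ∧ corr Q x y ≤ 1 := by
  obtain ⟨hpos, hnorm, -, -⟩ := hQ
  have hn := hnorm x y
  have p00 := hpos 0 0 x y; have p01 := hpos 0 1 x y
  have p10 := hpos 1 0 x y; have p11 := hpos 1 1 x y
  simp only [Fin.sum_univ_two] at hn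
  constructor <;>
    · simp only [corr, Fin.sum_univ_two, Fin.val_zero, Fin.val_one]
      norm_num
      linarith

private lemma chsh_ge_neg_four {Q : Behaviour} (hQ : Q ∈ NS) : -4 ≤ chsh Q := by
  have h00 := corr_bounds hQ 0 0
  have h01 := corr_bounds hQ 0 1
  have h10 := corr_bounds hQ 1 0
  have h11 := corr_bounds hQ 1 1
  unfold chsh
  linarith [h00.1, h01.1, h10.1, h11.2]

private lemma chsh_le_four {Q : Behaviour} (hQ : Q ∈ NS) : chsh Q ≤ 4 := by
  have h00 := corr_bounds hQ 0 0
  have h01 := corr_bounds hQ 0 1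
  have h10 := corr_bounds hQ 1 0
  have h11 := corr_bounds hQ 1 1
  unfold chsh
  linarith [h00.2, h01.2, h10.2, h11.1]

private lemma chsh_mix (R S : Behaviour) (l : ℝ) :
    chsh ((1 - l) • R + l • S) = (1 - l) * chsh R + l * chsh S := by
  simp only [chsh, corr, Fin.sum_univ_two, Pi.add_apply, Pi.smul_apply, smul_eq_mul]
  ring

/-- The anti-PR box. -/
private noncomputable def antiPR : Behaviour :=
  fun a b x y => if a + b + 1 = x * y then 1/2 else 0

private lemma antiPR_mem_NS : antiPR ∈ NS := by
  refine ⟨?_, ?_, ?_, ?_⟩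
  · intro a b x y
    unfold antiPR
    split <;> norm_num
  · intro x y
    rcases fin2_cases x with hx | hx <;> rcases fin2_cases y with hy | hy <;>
      subst hx hy <;> simp [Fin.sum_univ_two, antiPR] <;> norm_num
  · intro a x y y'
    rcases fin2_cases a with h | h <;> rcases fin2_cases x with h2 | h2 <;>
      rcases fin2_cases y with h3 | h3 <;> rcases fin2_cases y' with h4 | h4 <;>
      subst h h2 h3 h4 <;> simp [Fin.sum_univ_two, antiPR] <;> norm_num
  · intro b x x' y
    rcases fin2_cases b with h | h <;> rcases fin2_cases x with h2 | h2 <;>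
      rcases fin2_cases x' with h3 | h3 <;> rcases fin2_cases y with h4 | h4 <;>
      subst h h2 h3 h4 <;> simp [Fin.sum_univ_two, antiPR] <;> norm_num

private lemma chsh_antiPR : chsh antiPR = -4 := by
  simp [chsh, corr, Fin.sum_univ_two, antiPR]
  norm_num

private lemma mix_mem_NS {R S : Behaviour} (hR : R ∈ NS) (hS : S ∈ NS) {l : ℝ}
    (h0 : 0 ≤ l) (h1 : l ≤ 1) : (1 - l) • R + l • S ∈ NS := by
  obtain ⟨Rpos, Rnorm, RA, RB⟩ := hR
  obtain ⟨Spos, Snorm, SA, SB⟩ := hS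
  refine ⟨?_, ?_, ?_, ?_⟩
  · intro a b x y
    simp only [Pi.add_apply, Pi.smul_apply, smul_eq_mul]
    have := Rpos a b x y; have := Spos a b x y
    nlinarith
  · intro x y
    have := Rnorm x y; have := Snorm x y
    simp only [Fin.sum_univ_two, Pi.add_apply, Pi.smul_apply, smul_eq_mul] at *
    nlinarith
  · intro a x y y'
    have := RA a x y y'; have := SA a x y y'
    simp only [Fin.sum_univ_two, Pi.add_apply, Pi.smul_apply, smul_eq_mul] at *
    nlinarith
  · intro b x x' y
    have := RB b x x' y; have := SB b x x' y
    simp only [Fin.sum_univ_two, Pi.add_apply, Pi.smul_apply, smul_eq_mul] at *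
    nlinarith

/-- **Visibility against no-signalling noise.** For a no-signalling behaviour with
CHSH value `β > 2`, the critical visibility against no-signalling noise equals
`(β − 2)/(β + 4)`. -/
theorem visibility_ns_noise (P : Behaviour) (hP : P ∈ NS) (hbeta : 2 < chsh P) :
    sInf {l : ℝ | l ∈ Set.Icc (0 : ℝ) 1 ∧ ∃ Pnoise ∈ NS, (1 - l) • P + l • Pnoise ∈ L}
      = (chsh P - 2) / (chsh P + 4) := by
  set B := chsh P with hB
  set lam : ℝ := (B - 2) / (B + 4) with hlam
  have hB4 : (0:ℝ) < B + 4 := by linarith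
  have hlam0 : 0 ≤ lam := div_nonneg (by linarith) (le_of_lt hB4)
  have hlam1 : lam ≤ 1 := by
    rw [hlam, div_le_one hB4]; linarith
  have hmem : lam ∈ {l : ℝ | l ∈ Set.Icc (0 : ℝ) 1 ∧
      ∃ Pnoise ∈ NS, (1 - l) • P + l • Pnoise ∈ L} := by
    refine ⟨⟨hlam0, hlam1⟩, antiPR, antiPR_mem_NS, ?_⟩
    apply mem_L_of_chsh_eq_two
    · exact mix_mem_NS hP antiPR_mem_NS hlam0 hlam1
    · rw [chsh_mix, chsh_antiPR, ← hB, hlam]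
      field_simp
      ring
  refine le_antisymm (csInf_le ⟨0, fun l hl => hl.1.1⟩ hmem) (le_csInf ⟨lam, hmem⟩ ?_)
  rintro l ⟨⟨hl0, hl1⟩, Pn, hPn, hL⟩
  have h1 : chsh ((1 - l) • P + l • Pn) ≤ 2 := chsh_le_two_of_mem_L hL
  rw [chsh_mix, ← hB] at h1
  have h2 : -4 ≤ chsh Pn := chsh_ge_neg_four hPn
  rw [hlam, div_le_iff₀ hB4]
  nlinarith
end

section
/- Let P ∈ Q be a quantum behaviour in the (2,2,2,2) Bell scenario with ⟨A₀B₀⟩ = ⟨A₀B₁⟩ = ⟨A₁B₀⟩ = α for some α ∈ [1/2, 1]. Then −⟨A₁B₁⟩ ≤ 3α − 4α³. -/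
open Matrix Kronecker ComplexOrder BigOperators

/-!
For `s ≥ 1/2` put `λ = 4s² - 1 ≥ 0`. For commuting self-adjoint `a₀, a₁, b₀, b₁` with squares
at most `1`, the operator `4s • (8s³ - λ(a₀b₀ + a₀b₁ + a₁b₀) + a₁b₁)` is the sum of squares
`λ(2s a₀ - b₀ - b₁)² + (2s a₁ - λ b₀ + b₁)²` plus nonnegative multiples of the `1 - a_x²`,
`1 - b_y²`, hence nonnegative. In a finite-dimensional realisation, `a_x = A_x ⊗ 1` and
`b_y = 1 ⊗ B_y` with `A_x = E^x_0 - E^x_1`, `B_y = F^y_0 - F^y_1` are such operators, and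
evaluating against `ρ` gives the Bell inequality `λ(⟨A₀B₀⟩ + ⟨A₀B₁⟩ + ⟨A₁B₀⟩) - ⟨A₁B₁⟩ ≤ 8s³`,
which passes to the closure `Q`. Taking `s = α` gives the claim; the inequality is tight at
`⟨A₀B₀⟩ = ⟨A₀B₁⟩ = ⟨A₁B₀⟩ = α`, `⟨A₁B₁⟩ = 4α³ - 3α`.
-/

section StarOrderedRing

variable {R : Type*} [Ring R]

theorem weighted_chsh_sos [Algebra ℝ R] (s : ℝ) {a₀ a₁ b₀ b₁ : R} (c₀₀ : Commute a₀ b₀)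
    (c₀₁ : Commute a₀ b₁) (c₁₀ : Commute a₁ b₀) (c₁₁ : Commute a₁ b₁) :
    (4 * s ^ 2 - 1) • ((2 * s) • a₀ - b₀ - b₁) ^ 2
        + ((2 * s) • a₁ - (4 * s ^ 2 - 1) • b₀ + b₁) ^ 2
        + (4 * s ^ 2) • ((4 * s ^ 2 - 1) • (1 - a₀ ^ 2) + (1 - a₁ ^ 2)
          + (4 * s ^ 2 - 1) • (1 - b₀ ^ 2) + (1 - b₁ ^ 2))
      = (4 * s) • ((8 * s ^ 3) • 1 - (4 * s ^ 2 - 1) • (a₀ * b₀ + a₀ * b₁ + a₁ * b₀)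
          + a₁ * b₁) := by
  simp only [sq, sub_mul, mul_sub, add_mul, mul_add, smul_mul_assoc, mul_smul_comm,
    ← c₀₀.eq, ← c₀₁.eq, ← c₁₀.eq, ← c₁₁.eq]
  module

variable [PartialOrder R] [StarRing R] [StarOrderedRing R]

theorem sub_sq_le_one_of_add_eq_one {e₀ e₁ : R} (h₀ : 0 ≤ e₀) (h₁ : 0 ≤ e₁)
    (hsum : e₀ + e₁ = 1) : (e₀ - e₁) ^ 2 ≤ 1 := by
  obtain rfl : e₁ = 1 - e₀ := eq_sub_of_add_eq' hsum
  -- `1 - (e₀ - e₁)² = 4 e₀ e₁`, and `e₀ e₁ = e₀ e₁ e₀ + e₁ e₀ e₁` is a sum of conjugates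
  have key : 1 - (e₀ - (1 - e₀)) ^ 2 =
      4 • (e₀ * (1 - e₀) * e₀ + (1 - e₀) * e₀ * (1 - e₀)) := by
    noncomm_ring
  rw [← sub_nonneg, key]
  exact nsmul_nonneg (add_nonneg (IsSelfAdjoint.conjugate_nonneg h₁ (.of_nonneg h₀))
    (IsSelfAdjoint.conjugate_nonneg h₀ (.of_nonneg h₁))) 4

theorem weighted_chsh_operator_le [Algebra ℝ R] [StarModule ℝ R] {s : ℝ} (hs : 1 / 2 ≤ s)
    {a₀ a₁ b₀ b₁ : R} (ha₀ : IsSelfAdjoint a₀) (ha₁ : IsSelfAdjoint a₁)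
    (hb₀ : IsSelfAdjoint b₀) (hb₁ : IsSelfAdjoint b₁) (ha₀' : a₀ ^ 2 ≤ 1) (ha₁' : a₁ ^ 2 ≤ 1)
    (hb₀' : b₀ ^ 2 ≤ 1) (hb₁' : b₁ ^ 2 ≤ 1) (c₀₀ : Commute a₀ b₀) (c₀₁ : Commute a₀ b₁)
    (c₁₀ : Commute a₁ b₀) (c₁₁ : Commute a₁ b₁) :
    (4 * s ^ 2 - 1) • (a₀ * b₀ + a₀ * b₁ + a₁ * b₀) - a₁ * b₁ ≤ (8 * s ^ 3) • 1 := by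
  have hcoef : 0 ≤ 4 * s ^ 2 - 1 := by nlinarith
  have hW₀ : IsSelfAdjoint ((2 * s) • a₀ - b₀ - b₁) :=
    (((IsSelfAdjoint.all _).smul ha₀).sub hb₀).sub hb₁
  have hW₁ : IsSelfAdjoint ((2 * s) • a₁ - (4 * s ^ 2 - 1) • b₀ + b₁) :=
    (((IsSelfAdjoint.all _).smul ha₁).sub ((IsSelfAdjoint.all _).smul hb₀)).add hb₁
  rw [← sub_nonneg] at ha₀' ha₁' hb₀' hb₁'
  have hsos : 0 ≤ (4 * s) • ((8 * s ^ 3) • 1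
      - (4 * s ^ 2 - 1) • (a₀ * b₀ + a₀ * b₁ + a₁ * b₀) + a₁ * b₁) := by
    rw [← weighted_chsh_sos s c₀₀ c₀₁ c₁₀ c₁₁]
    refine add_nonneg (add_nonneg (smul_nonneg hcoef hW₀.sq_nonneg) hW₁.sq_nonneg)
      (smul_nonneg (by positivity) ?_)
    exact add_nonneg (add_nonneg (add_nonneg (smul_nonneg hcoef ha₀') ha₁')
      (smul_nonneg hcoef hb₀')) hb₁'
  have h4s : 0 < 4 * s := by positivity
  have := smul_nonneg (inv_nonneg.mpr h4s.le) hsos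
  rwa [inv_smul_smul₀ h4s.ne', sub_add, sub_nonneg] at this

end StarOrderedRing

open scoped MatrixOrder

namespace Matrix

section Kronecker

variable {α l m n p : Type*}

theorem sub_kronecker [NonUnitalNonAssocRing α] (A₁ A₂ : Matrix l m α) (B : Matrix n p α) :
    (A₁ - A₂) ⊗ₖ B = A₁ ⊗ₖ B - A₂ ⊗ₖ B := by
  ext
  simp [sub_mul]

theorem kronecker_sub [NonUnitalNonAssocRing α] (A : Matrix l m α) (B₁ B₂ : Matrix n p α) :
    A ⊗ₖ (B₁ - B₂) = A ⊗ₖ B₁ - A ⊗ₖ B₂ := by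
  ext
  simp [mul_sub]

theorem _root_.IsSelfAdjoint.kronecker [CommRing α] [StarRing α] {A : Matrix l l α}
    {B : Matrix n n α} (hA : IsSelfAdjoint A) (hB : IsSelfAdjoint B) :
    IsSelfAdjoint (A ⊗ₖ B) := by
  rw [IsSelfAdjoint, star_eq_conjTranspose, conjTranspose_kronecker, ← star_eq_conjTranspose,
    ← star_eq_conjTranspose, hA.star_eq, hB.star_eq]

end Kronecker

variable {𝕜 n m : Type*} [RCLike 𝕜] [Fintype n] [Fintype m] [DecidableEq n] [DecidableEq m]

theorem kronecker_one_sq_le_one {A : Matrix n n 𝕜} (h : A ^ 2 ≤ 1) :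
    (A ⊗ₖ (1 : Matrix m m 𝕜)) ^ 2 ≤ 1 := by
  rw [le_iff, sq, ← mul_kronecker_mul, one_mul, ← sq, ← one_kronecker_one, ← sub_kronecker]
  exact (le_iff.mp h).kronecker .one

theorem one_kronecker_sq_le_one {B : Matrix m m 𝕜} (h : B ^ 2 ≤ 1) :
    ((1 : Matrix n n 𝕜) ⊗ₖ B) ^ 2 ≤ 1 := by
  rw [le_iff, sq, ← mul_kronecker_mul, one_mul, ← sq, ← one_kronecker_one, ← kronecker_sub]
  exact PosSemidef.one.kronecker (le_iff.mp h)

theorem commute_kronecker_one_one_kronecker (A : Matrix n n 𝕜) (B : Matrix m m 𝕜) :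
    Commute (A ⊗ₖ (1 : Matrix m m 𝕜)) ((1 : Matrix n n 𝕜) ⊗ₖ B) := by
  simp only [Commute, SemiconjBy, ← mul_kronecker_mul, Matrix.mul_one, Matrix.one_mul]

theorem trace_mul_le_trace_mul {X Y ρ : Matrix n n 𝕜} (hXY : X ≤ Y) (hρ : ρ.PosSemidef) :
    (X * ρ).trace ≤ (Y * ρ).trace := by
  obtain ⟨Z, hZ⟩ := CStarAlgebra.nonneg_iff_eq_star_mul_self.mp (sub_nonneg.mpr hXY)
  rw [← sub_nonneg, ← trace_sub, ← Matrix.sub_mul, hZ, mul_assoc, trace_mul_comm, mul_assoc,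
    star_eq_conjTranspose, ← mul_assoc]
  exact (hρ.mul_mul_conjTranspose_same Z).trace_nonneg

end Matrix

theorem corr_eq_trace {d : ℕ} {P : Behaviour} {ρ : Matrix (Fin d × Fin d) (Fin d × Fin d) ℂ}
    {E F : Fin 2 → Fin 2 → Matrix (Fin d) (Fin d) ℂ}
    (hP : ∀ a b x y, (P a b x y : ℂ) = ((E x a ⊗ₖ F y b) * ρ).trace) (x y : Fin 2) :
    (corr P x y : ℂ) = (((E x 0 - E x 1) ⊗ₖ (F y 0 - F y 1)) * ρ).trace := by
  simp only [sub_kronecker, kronecker_sub, Matrix.sub_mul, trace_sub, ← hP]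
  simp only [corr, Fin.sum_univ_two, Fin.val_zero, Fin.val_one]
  push_cast
  ring

def weightedChsh (s : ℝ) (P : Behaviour) : ℝ :=
  (4 * s ^ 2 - 1) * (corr P 0 0 + corr P 0 1 + corr P 1 0) - corr P 1 1

theorem continuous_weightedChsh (s : ℝ) : Continuous (weightedChsh s) := by
  unfold weightedChsh corr
  fun_prop

theorem HasRealisation.weightedChsh_le {d : ℕ} {P : Behaviour} (hP : HasRealisation d P)
    {s : ℝ} (hs : 1 / 2 ≤ s) : weightedChsh s P ≤ 8 * s ^ 3 := by
  obtain ⟨ρ, E, F, hρ, hρ₁, hE, hF, hEsum, hFsum, hPρ⟩ := hP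
  have hA : ∀ x, IsSelfAdjoint (E x 0 - E x 1) := fun x =>
    (IsSelfAdjoint.of_nonneg (hE x 0).nonneg).sub (.of_nonneg (hE x 1).nonneg)
  have hB : ∀ y, IsSelfAdjoint (F y 0 - F y 1) := fun y =>
    (IsSelfAdjoint.of_nonneg (hF y 0).nonneg).sub (.of_nonneg (hF y 1).nonneg)
  have hA₂ : ∀ x, (E x 0 - E x 1) ^ 2 ≤ 1 := fun x => sub_sq_le_one_of_add_eq_one
    (hE x 0).nonneg (hE x 1).nonneg (by simpa only [Fin.sum_univ_two] using hEsum x)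
  have hB₂ : ∀ y, (F y 0 - F y 1) ^ 2 ≤ 1 := fun y => sub_sq_le_one_of_add_eq_one
    (hF y 0).nonneg (hF y 1).nonneg (by simpa only [Fin.sum_univ_two] using hFsum y)
  have hcorr : ∀ x y, (corr P x y : ℂ) =
      ((E x 0 - E x 1) ⊗ₖ (1 : Matrix (Fin d) (Fin d) ℂ) * 1 ⊗ₖ (F y 0 - F y 1) * ρ).trace :=
    fun x y => by rw [← mul_kronecker_mul, Matrix.mul_one, Matrix.one_mul, corr_eq_trace hPρ]
  have hop := weighted_chsh_operator_le (R := Matrix (Fin d × Fin d) (Fin d × Fin d) ℂ) hs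
    ((hA 0).kronecker (.one _)) ((hA 1).kronecker (.one _))
    ((IsSelfAdjoint.one _).kronecker (hB 0)) ((IsSelfAdjoint.one _).kronecker (hB 1))
    (kronecker_one_sq_le_one (hA₂ 0)) (kronecker_one_sq_le_one (hA₂ 1))
    (one_kronecker_sq_le_one (hB₂ 0)) (one_kronecker_sq_le_one (hB₂ 1))
    (commute_kronecker_one_one_kronecker _ _) (commute_kronecker_one_one_kronecker _ _)
    (commute_kronecker_one_one_kronecker _ _) (commute_kronecker_one_one_kronecker _ _)
  have key := trace_mul_le_trace_mul hop hρ
  simp only [Matrix.sub_mul, Matrix.add_mul, Matrix.smul_mul, Matrix.one_mul, trace_sub,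
    trace_add, trace_smul, ← hcorr, hρ₁, Complex.real_smul, mul_one] at key
  exact_mod_cast key

theorem weightedChsh_le_of_mem_Q {P : Behaviour} (hP : P ∈ Q) {s : ℝ} (hs : 1 / 2 ≤ s) :
    weightedChsh s P ≤ 8 * s ^ 3 := by
  refine closure_minimal ?_ (isClosed_le (continuous_weightedChsh s) continuous_const) hP
  rintro P' ⟨_, -, hP'⟩
  exact hP'.weightedChsh_le hs

/-- For a quantum behaviour with `⟨A₀B₀⟩ = ⟨A₀B₁⟩ = ⟨A₁B₀⟩ = α`, `α ∈ [1/2, 1]`,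
one has `−⟨A₁B₁⟩ ≤ 3α − 4α³`. -/
theorem curved_boundary (P : Behaviour) (hP : P ∈ Q) (alpha : ℝ)
    (halpha : alpha ∈ Set.Icc (1 / 2 : ℝ) 1)
    (h00 : corr P 0 0 = alpha) (h01 : corr P 0 1 = alpha) (h10 : corr P 1 0 = alpha) :
    -corr P 1 1 ≤ 3 * alpha - 4 * alpha ^ 3 := by
  have h := weightedChsh_le_of_mem_Q hP halpha.1
  rw [weightedChsh, h00, h01, h10] at h
  linear_combination h
end

section
/- In the (2,2,2,2) Bell scenario, consider the Bell function B·P := ⟨A₀B₀⟩ + ⟨A₀B₁⟩ + ⟨A₁B₀⟩ + ⟨A₁B₁⟩. Then β_L(B) = β_Q(B) = β_NS(B) = 4, and the set of maximisers is the same for all three sets: F_L(B) = F_Q(B) = F_NS(B) is the line segment joining the deterministic point with ⟨A_x⟩ = ⟨B_y⟩ = ⟨A_xB_y⟩ = 1 for all x,y and the deterministic point with ⟨A_x⟩ = ⟨B_y⟩ = −1 and ⟨A_xB_y⟩ = 1 for all x,y. -/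
open Matrix Kronecker ComplexOrder BigOperators

/-- The Bell functional `B·P = ⟨A₀B₀⟩ + ⟨A₀B₁⟩ + ⟨A₁B₀⟩ + ⟨A₁B₁⟩`. -/
def Bval (P : Behaviour) : ℝ := corr P 0 0 + corr P 0 1 + corr P 1 0 + corr P 1 1

/-- The deterministic point with all marginals and correlators `+1`. -/
noncomputable def Pplus : Behaviour := fromCorr (fun _ => 1) (fun _ => 1) (fun _ _ => 1)

/-- The deterministic point with marginals `−1` and all correlators `+1`. -/
noncomputable def Pminus : Behaviour := fromCorr (fun _ => -1) (fun _ => -1) (fun _ _ => 1)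

/-!
For a no-signalling `P`, normalisation gives `⟨A_x B_y⟩ = 1 - 2 P(a ≠ b | x y)`, so
`B·P = 4 - 2 ∑ P(a ≠ b | x y) ≤ 4`, with equality iff the outcomes are perfectly correlated for
every pair of inputs. No-signalling then makes `P(00|xy)` independent of `x, y`, which places `P`
on the segment `[P₊, P₋]`. The endpoints are deterministic, so the segment lies in `L`; its points
are input-independent shared randomness, realised in `Q` by a diagonal state on `ℂ² ⊗ ℂ²` measured
in the computational basis. As `L, Q ⊆ NS`, the three maxima and faces coincide.
-/

namespace Matrix

variable {ι l m n p : Type*}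

theorem sum_kronecker {α : Type*} [NonUnitalNonAssocSemiring α] (s : Finset ι)
    (A : ι → Matrix l m α) (B : Matrix n p α) :
    (∑ i ∈ s, A i) ⊗ₖ B = ∑ i ∈ s, A i ⊗ₖ B := by
  ext ⟨i, j⟩ ⟨k, l⟩
  simp [sum_apply, Finset.sum_mul]

theorem kronecker_sum {α : Type*} [NonUnitalNonAssocSemiring α] (s : Finset ι)
    (A : Matrix l m α) (B : ι → Matrix n p α) :
    A ⊗ₖ (∑ i ∈ s, B i) = ∑ i ∈ s, A ⊗ₖ B i := by
  ext ⟨i, j⟩ ⟨k, l⟩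
  simp [sum_apply, Finset.mul_sum]

open scoped MatrixOrder in
theorem PosSemidef.trace_mul_nonneg {𝕜 : Type*} [RCLike 𝕜] [Fintype n] [DecidableEq n]
    {A B : Matrix n n 𝕜} (hA : A.PosSemidef) (hB : B.PosSemidef) : 0 ≤ (A * B).trace := by
  obtain ⟨C, rfl⟩ := CStarAlgebra.nonneg_iff_eq_star_mul_self.mp hA.nonneg
  rw [star_eq_conjTranspose, Matrix.mul_assoc, trace_mul_comm]
  exact (hB.mul_mul_conjTranspose_same C).trace_nonneg

end Matrix

lemma isClosed_NS : IsClosed NS := by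
  simp only [NS, Set.ofPred_and, Set.ofPred_forall]
  refine .inter ?_ (.inter ?_ (.inter ?_ ?_)) <;>
    refine isClosed_iInter fun _ => isClosed_iInter fun _ => ?_
  · exact isClosed_iInter fun _ => isClosed_iInter fun _ =>
      isClosed_le (by fun_prop) (by fun_prop)
  · exact isClosed_eq (by fun_prop) (by fun_prop)
  all_goals exact isClosed_iInter fun _ => isClosed_iInter fun _ =>
    isClosed_eq (by fun_prop) (by fun_prop)

lemma convex_NS : Convex ℝ NS := by
  rintro P ⟨hP0, hP1, hPA, hPB⟩ R ⟨hR0, hR1, hRA, hRB⟩ u v hu hv huv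
  have happ : ∀ a b x y, (u • P + v • R) a b x y = u * P a b x y + v * R a b x y :=
    fun _ _ _ _ => rfl
  refine ⟨fun a b x y => ?_, fun x y => ?_, fun a x y y' => ?_, fun b x x' y => ?_⟩ <;>
    simp only [happ, Finset.sum_add_distrib, ← Finset.mul_sum]
  · exact add_nonneg (mul_nonneg hu (hP0 a b x y)) (mul_nonneg hv (hR0 a b x y))
  · rw [hP1, hR1, mul_one, mul_one, huv]
  · rw [hPA a x y y', hRA a x y y']
  · rw [hPB b x x' y, hRB b x x' y]

lemma Qfinite_subset_NS : Qfinite ⊆ NS := by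
  rintro P ⟨d, -, ρ, E, F, hρ, hρ_trace, hE, hF, hE_sum, hF_sum, hP⟩
  have hA_marg : ∀ a x y, ((∑ b, P a b x y : ℝ) : ℂ) = ((E x a ⊗ₖ 1) * ρ).trace := by
    intro a x y
    rw [← hF_sum y, kronecker_sum, Finset.sum_mul, trace_sum]
    push_cast
    simp_rw [hP]
  have hB_marg : ∀ b x y, ((∑ a, P a b x y : ℝ) : ℂ) = ((1 ⊗ₖ F y b) * ρ).trace := by
    intro b x y
    rw [← hE_sum x, sum_kronecker, Finset.sum_mul, trace_sum]
    push_cast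
    simp_rw [hP]
  refine ⟨fun a b x y => ?_, fun x y => ?_, fun a x y y' => ?_, fun b x x' y => ?_⟩
  · have h := ((hE x a).kronecker (hF y b)).trace_mul_nonneg hρ
    rwa [← hP, Complex.zero_le_real] at h
  · have h : ((∑ a, ∑ b, P a b x y : ℝ) : ℂ) = 1 := by
      rw [Complex.ofReal_sum]
      simp_rw [hA_marg]
      rw [← trace_sum, ← Finset.sum_mul, ← sum_kronecker, hE_sum, one_kronecker_one,
        Matrix.one_mul, hρ_trace]
    exact_mod_cast h
  · exact_mod_cast (hA_marg a x y).trans (hA_marg a x y').symm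
  · exact_mod_cast (hB_marg b x y).trans (hB_marg b x' y).symm

lemma detBehaviour_mem_NS (f g : Fin 2 → Fin 2) : detBehaviour f g ∈ NS := by
  have hA_marg : ∀ a x y, ∑ b, detBehaviour f g a b x y = if a = f x then 1 else 0 := by
    intro a x y
    by_cases h : a = f x <;> simp [detBehaviour, h]
  have hB_marg : ∀ b x y, ∑ a, detBehaviour f g a b x y = if b = g y then 1 else 0 := by
    intro b x y
    by_cases h : b = g y <;> simp [detBehaviour, h]
  refine ⟨fun a b x y => ?_, fun x y => ?_, fun a x y y' => ?_, fun b x x' y => ?_⟩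
  · unfold detBehaviour; split_ifs <;> norm_num
  · simp [hA_marg]
  · simp [hA_marg]
  · simp [hB_marg]

lemma L_subset_NS : L ⊆ NS :=
  convexHull_min (by rintro P ⟨f, g, rfl⟩; exact detBehaviour_mem_NS f g) convex_NS

lemma Q_subset_NS : Q ⊆ NS := closure_minimal Qfinite_subset_NS isClosed_NS

lemma detBehaviour_eq_fromCorr (f g : Fin 2 → Fin 2) :
    detBehaviour f g = fromCorr (fun x => (-1) ^ (f x : ℕ)) (fun y => (-1) ^ (g y : ℕ))
      (fun x y => (-1) ^ ((f x : ℕ) + (g y : ℕ))) := by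
  funext a b x y
  simp only [detBehaviour, fromCorr]
  generalize f x = i, g y = j
  fin_cases a <;> fin_cases b <;> fin_cases i <;> fin_cases j <;> norm_num

lemma Pplus_eq_detBehaviour : Pplus = detBehaviour (fun _ => 0) (fun _ => 0) := by
  simp [Pplus, detBehaviour_eq_fromCorr]

lemma Pminus_eq_detBehaviour : Pminus = detBehaviour (fun _ => 1) (fun _ => 1) := by
  simp [Pminus, detBehaviour_eq_fromCorr]

lemma corr_eq_one_sub {P : Behaviour} {x y : Fin 2} (hP : ∑ a, ∑ b, P a b x y = 1) :
    corr P x y = 1 - 2 * (P 0 1 x y + P 1 0 x y) := by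
  simp only [corr, Fin.sum_univ_two] at hP ⊢
  norm_num
  linarith

lemma Bval_eq_four_sub {P : Behaviour} (hP : P ∈ NS) :
    Bval P = 4 - 2 * ∑ x, ∑ y, (P 0 1 x y + P 1 0 x y) := by
  simp only [Bval, corr_eq_one_sub (hP.2.1 _ _), Fin.sum_univ_two]
  ring

lemma Bval_le_four {P : Behaviour} (hP : P ∈ NS) : Bval P ≤ 4 := by
  have h : 0 ≤ ∑ x, ∑ y, (P 0 1 x y + P 1 0 x y) :=
    Finset.sum_nonneg fun x _ => Finset.sum_nonneg fun y _ => add_nonneg (hP.1 ..) (hP.1 ..)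
  linarith [Bval_eq_four_sub hP]

lemma Bval_eq_four_iff {P : Behaviour} (hP : P ∈ NS) :
    Bval P = 4 ↔ ∀ x y, P 0 1 x y = 0 ∧ P 1 0 x y = 0 := by
  have hnn : ∀ x y, 0 ≤ P 0 1 x y + P 1 0 x y := fun x y => add_nonneg (hP.1 ..) (hP.1 ..)
  rw [Bval_eq_four_sub hP, sub_eq_self, mul_eq_zero, or_iff_right two_ne_zero,
    Finset.sum_eq_zero_iff_of_nonneg fun x _ => Finset.sum_nonneg fun y _ => hnn x y]
  simp only [Finset.mem_univ, true_imp_iff, Finset.sum_eq_zero_iff_of_nonneg fun y _ => hnn _ y,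
    add_eq_zero_iff_of_nonneg (hP.1 ..) (hP.1 ..)]

lemma mem_segment_of_mem_NS {P : Behaviour} (hP : P ∈ NS)
    (h : ∀ x y, P 0 1 x y = 0 ∧ P 1 0 x y = 0) : P ∈ segment ℝ Pplus Pminus := by
  obtain ⟨hP0, hP1, hA, hB⟩ := hP
  have h00 : ∀ x y, P 0 0 x y = P 0 0 0 0 := by
    intro x y
    have hy := hA 0 x y 0
    have hx := hB 0 x 0 0
    simp only [Fin.sum_univ_two, (h _ _).1, (h _ _).2, add_zero] at hy hx
    linarith
  have h11 : ∀ x y, P 1 1 x y = 1 - P 0 0 0 0 := by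
    intro x y
    have h1 := hP1 x y
    simp only [Fin.sum_univ_two, (h _ _).1, (h _ _).2, h00 x y] at h1
    linarith
  refine ⟨P 0 0 0 0, 1 - P 0 0 0 0, hP0 .., by linarith [hP0 1 1 0 0, h11 0 0], by ring, ?_⟩
  funext a b x y
  rw [Pplus_eq_detBehaviour, Pminus_eq_detBehaviour]
  fin_cases a <;> fin_cases b <;> simp [detBehaviour, h00, h11, h]

lemma segment_subset_NS : segment ℝ Pplus Pminus ⊆ NS := by
  rw [Pplus_eq_detBehaviour, Pminus_eq_detBehaviour]
  exact convex_NS.segment_subset (detBehaviour_mem_NS ..) (detBehaviour_mem_NS ..)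

lemma face_NS_eq_segment : {P ∈ NS | Bval P = 4} = segment ℝ Pplus Pminus := by
  ext P
  refine ⟨fun ⟨hP, h4⟩ => mem_segment_of_mem_NS hP ((Bval_eq_four_iff hP).mp h4), fun hseg => ?_⟩
  have hP := segment_subset_NS hseg
  refine ⟨hP, (Bval_eq_four_iff hP).mpr fun x y => ?_⟩
  obtain ⟨u, v, -, -, -, rfl⟩ := hseg
  simp [Pplus_eq_detBehaviour, Pminus_eq_detBehaviour, detBehaviour]

lemma hasRealisation_two_of_nonneg_of_sum_eq_one {p : Fin 2 → Fin 2 → ℝ} (hp : ∀ a b, 0 ≤ p a b)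
    (hp_sum : ∑ a, ∑ b, p a b = 1) : HasRealisation 2 fun a b _ _ => p a b := by
  have hproj (a : Fin 2) : (diagonal (Pi.single a 1 : Fin 2 → ℂ)).PosSemidef :=
    posSemidef_diagonal_iff.mpr fun i => by
      rcases eq_or_ne i a with rfl | h <;> simp [*]
  have hsum : ∑ a : Fin 2, diagonal (Pi.single a 1 : Fin 2 → ℂ) = 1 := by
    rw [← diagonal_one]
    exact (map_sum (diagonalAddMonoidHom (Fin 2) ℂ) _ _).symm.trans
      (congrArg diagonal (Finset.univ_sum_single _))
  refine ⟨diagonal fun ab => (p ab.1 ab.2 : ℂ), fun _ a => diagonal (Pi.single a 1),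
    fun _ b => diagonal (Pi.single b 1), posSemidef_diagonal_iff.mpr fun ab => ?_, ?_,
    fun _ => hproj, fun _ => hproj, fun _ => hsum, fun _ => hsum, fun a b _ _ => ?_⟩
  · exact_mod_cast hp ..
  · rw [trace_diagonal, Fintype.sum_prod_type]
    exact_mod_cast hp_sum
  · rw [diagonal_kronecker_diagonal, diagonal_mul_diagonal, trace_diagonal,
      Fintype.sum_prod_type]
    simp [Pi.single_apply]

lemma segment_subset_Qfinite : segment ℝ Pplus Pminus ⊆ Qfinite := by
  intro P hseg
  have hP := segment_subset_NS hseg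
  have h_indep : P = fun a b _ _ => P a b 0 0 := by
    obtain ⟨u, v, -, -, -, rfl⟩ := hseg
    rfl -- `Pplus` and `Pminus` do not depend on the inputs, definitionally
  rw [h_indep]
  exact ⟨2, two_pos, hasRealisation_two_of_nonneg_of_sum_eq_one (fun a b => hP.1 a b 0 0) (hP.2.1 0 0)⟩

lemma segment_subset_L : segment ℝ Pplus Pminus ⊆ L := by
  rw [Pplus_eq_detBehaviour, Pminus_eq_detBehaviour]
  exact (convex_convexHull ℝ _).segment_subset (subset_convexHull ℝ _ ⟨_, _, rfl⟩)
    (subset_convexHull ℝ _ ⟨_, _, rfl⟩)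

lemma sSup_Bval_image_eq_four {S : Set Behaviour} (hS : S ⊆ NS)
    (hseg : segment ℝ Pplus Pminus ⊆ S) : sSup (Bval '' S) = 4 := by
  have hPplus := left_mem_segment ℝ Pplus Pminus
  refine IsGreatest.csSup_eq ⟨⟨Pplus, hseg hPplus, (face_NS_eq_segment ▸ hPplus).2⟩, ?_⟩
  rintro _ ⟨P, hP, rfl⟩
  exact Bval_le_four (hS hP)

lemma face_eq_segment {S : Set Behaviour} (hS : S ⊆ NS) (hseg : segment ℝ Pplus Pminus ⊆ S) :
    {P ∈ S | Bval P = sSup (Bval '' S)} = segment ℝ Pplus Pminus := by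
  rw [sSup_Bval_image_eq_four hS hseg, ← face_NS_eq_segment]
  exact Set.Subset.antisymm (fun P ⟨hP, h4⟩ => ⟨hS hP, h4⟩)
    fun P hP => ⟨hseg (face_NS_eq_segment ▸ hP), hP.2⟩

/-- **A Bell function of class (4d):** `β_L = β_Q = β_NS = 4` and the local,
quantum and no-signalling faces all coincide with the segment joining the two
deterministic points `P₊` and `P₋`. -/
theorem class_4d_face :
    sSup (Bval '' L) = 4 ∧ sSup (Bval '' Q) = 4 ∧ sSup (Bval '' NS) = 4 ∧
    {P ∈ L | Bval P = sSup (Bval '' L)} = segment ℝ Pplus Pminus ∧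
    {P ∈ Q | Bval P = sSup (Bval '' Q)} = segment ℝ Pplus Pminus ∧
    {P ∈ NS | Bval P = sSup (Bval '' NS)} = segment ℝ Pplus Pminus := by
  have segment_subset_Q : segment ℝ Pplus Pminus ⊆ Q := segment_subset_Qfinite.trans subset_closure
  exact ⟨sSup_Bval_image_eq_four L_subset_NS segment_subset_L,
    sSup_Bval_image_eq_four Q_subset_NS segment_subset_Q,
    sSup_Bval_image_eq_four subset_rfl segment_subset_NS,
    face_eq_segment L_subset_NS segment_subset_L,
    face_eq_segment Q_subset_NS segment_subset_Q,
    face_eq_segment subset_rfl segment_subset_NS⟩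
end
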